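/- arXiv:2605.29318 — 2 statements merged into one kernel-verified Lean document; each statement's English description precedes it below -/
import Mathlib

section
/- Let λ, μ ∈ ℝ with λ + μ ≠ 0 and γ = 1 + μ/(λ + μ). The second Fréchet derivative of the Neo-Hookean energy density Ψ at the identity matrix I, applied to directions H, K ∈ Matrix (Fin 3) (Fin 3) ℝ, equals B(H, K) = μ·tr(Hᵀ K) + λ·tr(H)·tr(K) + μ·tr(H K). -/
/-!
Jacobi's formula `D det(F)[K] = tr(adj F · K)` shows that `DΨ(F)[K] = tr(P(F)ᵀ K)` with the
first Piola–Kirchhoff stress `P(F) = (λ + μ)(det F - γ) adj(F)ᵀ + μ F`. Differentiating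
`adj(A) A = det(A) 1` at `A = 1` gives `D adj(1)[H] = tr H · 1 - H`, and since
`(λ + μ)(1 - γ) = -μ` the stress linearizes to Hooke's law
`DP(1)[H] = λ tr H · 1 + μ (H + Hᵀ)`; pairing with `K` gives `B(H, K)`.
-/

open Matrix

attribute [local instance] Matrix.normedAddCommGroup Matrix.normedSpace

/-- Neo-Hookean strain energy density with Lamé parameters `lam`, `mu`,
`γ = 1 + mu / (lam + mu)` and constant offset `E0`. -/
noncomputable def neoHookean (lam mu E0 : ℝ) (F : Matrix (Fin 3) (Fin 3) ℝ) : ℝ :=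
  (1 / 2) * ((lam + mu) * (F.det - (1 + mu / (lam + mu))) ^ 2 + mu * (Fᵀ * F).trace - E0)

section

-- With the entrywise topology out of the way, the continuous linear maps defined below carry
-- the norm topology, which is the one `fderiv` produces.
attribute [-instance] instTopologicalSpaceMatrix Matrix.instUniformSpace

namespace Matrix

theorem det_updateRow_eq_sum_adjugate_mul {R n : Type*} [CommRing R] [Fintype n] [DecidableEq n]
    (A : Matrix n n R) (i : n) (v : n → R) :
    (A.updateRow i v).det = ∑ j, A.adjugate j i * v j := by
  rw [← cramer_transpose_apply, cramer_eq_adjugate_mulVec, ← adjugate_transpose]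
  simp [mulVec, dotProduct]

variable {𝕜 : Type*} [NontriviallyNormedField 𝕜] {n : Type*} [Fintype n]

theorem differentiable_updateRow [DecidableEq n] (i : n) (v : n → 𝕜) :
    Differentiable 𝕜 fun A : Matrix n n 𝕜 => A.updateRow i v := by
  refine differentiable_pi.2 fun k => ?_
  rcases eq_or_ne k i with rfl | hk
  · simp only [updateRow_self]
    exact differentiable_const v
  · simp only [updateRow_ne hk]
    exact differentiable_apply k

variable [CompleteSpace 𝕜]

noncomputable def transposeCLM : Matrix n n 𝕜 →L[𝕜] Matrix n n 𝕜 :=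
  LinearMap.toContinuousLinearMap (transposeLinearEquiv n n 𝕜 𝕜).toLinearMap

@[simp] theorem transposeCLM_apply (A : Matrix n n 𝕜) : transposeCLM A = Aᵀ := rfl

variable [DecidableEq n]

noncomputable def mulCLM : Matrix n n 𝕜 →L[𝕜] Matrix n n 𝕜 →L[𝕜] Matrix n n 𝕜 :=
  LinearMap.toContinuousLinearMap
    (LinearMap.toContinuousLinearMap.toLinearMap ∘ₗ LinearMap.mul 𝕜 (Matrix n n 𝕜))

noncomputable def frobeniusCLM : Matrix n n 𝕜 →L[𝕜] Matrix n n 𝕜 →L[𝕜] 𝕜 :=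
  LinearMap.toContinuousLinearMap
    (LinearMap.toContinuousLinearMap.toLinearMap ∘ₗ
      ((LinearMap.mul 𝕜 (Matrix n n 𝕜)).compr₂ (traceLinearMap n 𝕜 𝕜)).comp
        (transposeLinearEquiv n n 𝕜 𝕜).toLinearMap)

@[simp] theorem frobeniusCLM_apply (A K : Matrix n n 𝕜) : frobeniusCLM A K = (Aᵀ * K).trace :=
  rfl

theorem hasFDerivAt_det (A : Matrix n n 𝕜) :
    HasFDerivAt det (frobeniusCLM (adjugate A)ᵀ) A := by
  let D : ContinuousMultilinearMap 𝕜 (fun _ : n => n → 𝕜) 𝕜 :=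
    ⟨(detRowAlternating : (n → 𝕜) [⋀^n]→ₗ[𝕜] 𝕜).toMultilinearMap, continuous_id.matrix_det⟩
  refine (D.hasFDerivAt A).congr_fderiv (ContinuousLinearMap.ext fun K : Matrix n n 𝕜 => ?_)
  calc D.linearDeriv A K = ∑ i, (A.updateRow i (K i)).det := D.linearDeriv_apply A K
    _ = ∑ i, ∑ j, A.adjugate j i * K i j := by simp_rw [det_updateRow_eq_sum_adjugate_mul]
    _ = frobeniusCLM A.adjugateᵀ K := by
      rw [frobeniusCLM_apply, transpose_transpose, trace, Finset.sum_comm]; rfl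

theorem differentiable_det : Differentiable 𝕜 (det : Matrix n n 𝕜 → 𝕜) :=
  fun A => (hasFDerivAt_det A).differentiableAt

theorem differentiable_adjugate : Differentiable 𝕜 (adjugate : Matrix n n 𝕜 → Matrix n n 𝕜) := by
  refine differentiable_pi.2 fun i => differentiable_pi.2 fun j => ?_
  simp_rw [adjugate_apply]
  exact differentiable_det.comp (differentiable_updateRow j _)

theorem fderiv_adjugate_one (H : Matrix n n 𝕜) :
    fderiv 𝕜 adjugate (1 : Matrix n n 𝕜) H = H.trace • 1 - H := by
  have hprod := mulCLM.hasFDerivAt_of_bilinear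
    (differentiable_adjugate (1 : Matrix n n 𝕜)).hasFDerivAt (hasFDerivAt_id 1)
  have hdet := (hasFDerivAt_det (1 : Matrix n n 𝕜)).smul_const (1 : Matrix n n 𝕜)
  have key := congrArg (· H) (hdet.unique
    (hprod.congr_of_eventuallyEq (Filter.Eventually.of_forall fun A => (adjugate_mul A).symm)))
  change ((adjugate 1)ᵀᵀ * H).trace • 1 = adjugate 1 * H + fderiv 𝕜 adjugate 1 H * 1 at key
  rw [adjugate_one, transpose_one, transpose_one, one_mul, mul_one] at key
  rw [key, add_sub_cancel_left]

theorem fderiv_fderiv_apply_of_fderiv_eq_frobeniusCLM {f : Matrix n n 𝕜 → 𝕜}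
    {P : Matrix n n 𝕜 → Matrix n n 𝕜} (hf : fderiv 𝕜 f = fun F => frobeniusCLM (P F))
    {A : Matrix n n 𝕜} (hP : DifferentiableAt 𝕜 P A) (H K : Matrix n n 𝕜) :
    fderiv 𝕜 (fderiv 𝕜 f) A H K = ((fderiv 𝕜 P A H)ᵀ * K).trace := by
  have hcomp : HasFDerivAt (fun F => frobeniusCLM (P F)) (frobeniusCLM.comp (fderiv 𝕜 P A)) A :=
    (ContinuousLinearMap.hasFDerivAt _).comp A hP.hasFDerivAt
  rw [hf, hcomp.fderiv]
  rfl

end Matrix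

variable (lam mu E0 : ℝ)

noncomputable def neoHookeanStress (F : Matrix (Fin 3) (Fin 3) ℝ) : Matrix (Fin 3) (Fin 3) ℝ :=
  ((lam + mu) * (F.det - (1 + mu / (lam + mu)))) • (adjugate F)ᵀ + mu • F

theorem hasFDerivAt_neoHookean (F : Matrix (Fin 3) (Fin 3) ℝ) :
    HasFDerivAt (neoHookean lam mu E0) (frobeniusCLM (neoHookeanStress lam mu F)) F := by
  have hdet := ((hasFDerivAt_det F).sub_const (1 + mu / (lam + mu))).pow 2
  have hfrob := frobeniusCLM.hasFDerivAt_of_bilinear (hasFDerivAt_id F) (hasFDerivAt_id F)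
  refine (((hdet.const_mul (lam + mu)).add (hfrob.const_mul mu)).sub_const E0).const_mul (1 / 2)
    |>.congr_fderiv (ContinuousLinearMap.ext fun K => ?_)
  simp only [one_div, Nat.add_one_sub_one, pow_one, nsmul_eq_mul, Nat.cast_ofNat, id_eq,
    ContinuousLinearMap.precompR_apply, ContinuousLinearMap.compL_apply,
    ContinuousLinearMap.comp_id, smul_add, _root_.add_apply, _root_.smul_apply, frobeniusCLM_apply,
    transpose_transpose, smul_eq_mul, ContinuousLinearMap.precompL_apply,
    ContinuousLinearMap.id_apply, neoHookeanStress, map_add, map_smul]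
  rw [← trace_transpose (Kᵀ * F), transpose_mul, transpose_transpose]
  ring

theorem differentiable_neoHookeanStress : Differentiable ℝ (neoHookeanStress lam mu) := by
  have hadj : Differentiable ℝ fun F : Matrix (Fin 3) (Fin 3) ℝ => transposeCLM (adjugate F) :=
    (transposeCLM (𝕜 := ℝ) (n := Fin 3)).differentiable.comp differentiable_adjugate
  have hstress :=
    (((differentiable_det.sub_const (1 + mu / (lam + mu))).const_mul (lam + mu)).smul hadj).add
      (differentiable_id.const_smul mu)
  exact hstress

theorem fderiv_neoHookeanStress_one (hlm : lam + mu ≠ 0) (H : Matrix (Fin 3) (Fin 3) ℝ) :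
    fderiv ℝ (neoHookeanStress lam mu) 1 H = (lam * H.trace) • 1 + mu • (H + Hᵀ) := by
  have hadj : HasFDerivAt (fun F : Matrix (Fin 3) (Fin 3) ℝ => transposeCLM (adjugate F))
      (transposeCLM.comp (fderiv ℝ adjugate 1)) 1 :=
    (ContinuousLinearMap.hasFDerivAt _).comp (1 : Matrix (Fin 3) (Fin 3) ℝ)
      (differentiable_adjugate 1).hasFDerivAt
  have hcoef := ((hasFDerivAt_det (1 : Matrix (Fin 3) (Fin 3) ℝ)).sub_const
    (1 + mu / (lam + mu))).const_mul (lam + mu)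
  have hstress : HasFDerivAt (neoHookeanStress lam mu) _ 1 :=
    (hcoef.smul hadj).add ((hasFDerivAt_id (1 : Matrix (Fin 3) (Fin 3) ℝ)).const_smul mu)
  rw [hstress.fderiv]
  simp only [det_one, sub_add_cancel_left, mul_neg, neg_smul, adjugate_one, transpose_one,
    transposeCLM_apply, _root_.add_apply, _root_.neg_apply, _root_.smul_apply,
    ContinuousLinearMap.comp_apply, fderiv_adjugate_one, transpose_sub, transpose_smul,
    ContinuousLinearMap.smulRight_apply, frobeniusCLM_apply, one_mul, smul_eq_mul,
    ContinuousLinearMap.id_apply, smul_add]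
  rw [mul_div_cancel₀ mu hlm]
  module

end

/-- The second Fréchet derivative of the Neo-Hookean energy at the identity equals
the bilinear form `B(H, K) = μ tr(Hᵀ K) + λ tr(H) tr(K) + μ tr(H K)`. -/
theorem neoHookean_second_fderiv_one (lam mu E0 : ℝ) (hlm : lam + mu ≠ 0) :
    ∀ H K : Matrix (Fin 3) (Fin 3) ℝ,
      fderiv ℝ (fderiv ℝ (neoHookean lam mu E0)) (1 : Matrix (Fin 3) (Fin 3) ℝ) H K =
        mu * (Hᵀ * K).trace + lam * H.trace * K.trace + mu * (H * K).trace := by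
  intro H K
  have hfirst :
      fderiv ℝ (neoHookean lam mu E0) = fun F => frobeniusCLM (neoHookeanStress lam mu F) :=
    funext fun F => (hasFDerivAt_neoHookean lam mu E0 F).fderiv
  refine (fderiv_fderiv_apply_of_fderiv_eq_frobeniusCLM hfirst
    (differentiable_neoHookeanStress lam mu 1) H K).trans ?_
  rw [fderiv_neoHookeanStress_one lam mu hlm]
  simp only [smul_add, transpose_add, transpose_smul, transpose_one, transpose_transpose, add_mul,
    Algebra.smul_mul_assoc, one_mul, trace_add, trace_smul, smul_eq_mul]
  ring
end

section
/- (Discrete form of Proposition 1.) Fix finitely many sample points indexed by i = 1, …, N, with quadrature weights v_i > 0, per-sample Lamé parameters λ_i, μ_i ∈ ℝ with λ_i + μ_i ≠ 0 and γ_i = 1 + μ_i/(λ_i + μ_i), and per-sample kernel gradient vectors g_{i,1}, …, g_{i,K} ∈ ℝ³. Define the discrete elastic energy E : (ℝ³)^K → ℝ by E(d) = Σ_i v_i · Ψ_i(I + Σ_{k=1}^{K} d_k g_{i,k}ᵀ), where Ψ_i is the Neo-Hookean density with parameters λ_i, μ_i, γ_i. For each coordinate s ∈ Fin 3, let H_{ss}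 ∈ ℝ^{K×K} be the Hessian at 0 of the function ℝ^K → ℝ obtained from E by letting only the s-th components of the nodal displacements d_k vary (all other components held at 0). Then the weight-space Hessian H_w = H_{xx} + H_{yy} + H_{zz} has entries (H_w)_{kl} = Σ_i v_i·(λ_i + 4μ_i)·⟨g_{i,k}, g_{i,l}⟩. -/
/-!
Along a single displacement component `s` every deformation gradient is `F = I + e_s wᵀ` with `w`
linear in the nodal weights. Then `det F = 1 + w_s` is affine in `w` and
`tr(FᵀF) = 3 + 2 w_s + |w|²`, so the Neo-Hookean energy is exactly quadratic in `w` (`γ` only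
enters its constant and linear terms), with Hessian the acoustic tensor
`A_s = (λ + μ) e_s e_sᵀ + μ I`. Hence `E` along `s` is a quadratic polynomial with Hessian
`Σ_i v_i G_i A_s G_iᵀ`, `G_i` the matrix of kernel gradients, and `Σ_s A_s = (λ + 4μ) I`.
-/

open Matrix

theorem fderiv_fderiv_const_add_add_bilinear {𝕜 E F : Type*} [NontriviallyNormedField 𝕜]
    [NormedAddCommGroup E] [NormedSpace 𝕜 E] [NormedAddCommGroup F] [NormedSpace 𝕜 F]
    (c : F) (L : E →L[𝕜] F) (B : E →L[𝕜] E →L[𝕜] F) (x u v : E) :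
    fderiv 𝕜 (fderiv 𝕜 fun y => c + L y + B y y) x u v = B u v + B v u := by
  have hD : fderiv 𝕜 (fun y => c + L y + B y y) = fun y => L + (B + B.flip) y := by
    funext y
    refine (((L.hasFDerivAt.const_add c).add
      (B.hasFDerivAt_of_bilinear (hasFDerivAt_id y) (hasFDerivAt_id y))).congr_fderiv ?_).fderiv
    ext w
    simp
  rw [hD, fderiv_const_add, ContinuousLinearMap.fderiv]
  simp

namespace Matrix

variable {ι m n R : Type*}

def IsQuadraticWithHessian [Fintype n] [CommSemiring R] (H : Matrix n n R) (f : (n → R) → R) :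
    Prop :=
  ∃ (c : R) (b : n → R) (A : Matrix n n R), A + Aᵀ = H ∧ ∀ x, f x = c + b ⬝ᵥ x + x ⬝ᵥ A *ᵥ x

namespace IsQuadraticWithHessian

theorem comp_vecMul [Fintype m] [Fintype n] [CommSemiring R] {H : Matrix n n R}
    {f : (n → R) → R} (hf : IsQuadraticWithHessian H f) (M : Matrix m n R) :
    IsQuadraticWithHessian (M * H * Mᵀ) fun x => f (x ᵥ* M) := by
  obtain ⟨c, b, A, rfl, hf⟩ := hf
  refine ⟨c, M *ᵥ b, M * A * Mᵀ, ?_, fun x => (hf _).trans ?_⟩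
  · simp only [transpose_mul, transpose_transpose, Matrix.mul_add, Matrix.add_mul, Matrix.mul_assoc]
  · rw [dotProduct_comm, ← dotProduct_mulVec, dotProduct_comm, ← dotProduct_mulVec,
      ← mulVec_transpose, mulVec_mulVec, mulVec_mulVec, Matrix.mul_assoc]

theorem sum_mul [Fintype ι] [Fintype n] [CommSemiring R] {H : ι → Matrix n n R}
    {f : ι → (n → R) → R} (hf : ∀ i, IsQuadraticWithHessian (H i) (f i)) (w : ι → R) :
    IsQuadraticWithHessian (∑ i, w i • H i) fun x => ∑ i, w i * f i x := by
  choose c b A hA hf using hf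
  refine ⟨∑ i, w i * c i, ∑ i, w i • b i, ∑ i, w i • A i, ?_, fun x => ?_⟩
  · simp only [← hA, transpose_sum, transpose_smul, smul_add, Finset.sum_add_distrib]
  · simp [hf, Matrix.sum_mulVec, sum_dotProduct, dotProduct_sum, Finset.sum_add_distrib, mul_add,
      smul_mulVec]

theorem fderiv_fderiv {𝕜 : Type*} [NontriviallyNormedField 𝕜] [CompleteSpace 𝕜]
    [Fintype n] [DecidableEq n] {H : Matrix n n 𝕜} {f : (n → 𝕜) → 𝕜}
    (hf : IsQuadraticWithHessian H f) (x u v : n → 𝕜) :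
    fderiv 𝕜 (fderiv 𝕜 f) x u v = u ⬝ᵥ H *ᵥ v := by
  obtain ⟨c, b, A, rfl, hf⟩ := hf
  obtain rfl : f = fun y => c + b ⬝ᵥ y + y ⬝ᵥ A *ᵥ y := funext hf
  have h := fderiv_fderiv_const_add_add_bilinear c (dotProductBilin 𝕜 𝕜 b).toContinuousLinearMap
    (toLinearMap₂' 𝕜 A).toContinuousBilinearMap x u v
  simp only [LinearMap.coe_toContinuousLinearMap', LinearMap.toContinuousBilinearMap_apply,
    toLinearMap₂'_apply', dotProductBilin_apply_apply] at h
  rw [h, add_mulVec, dotProduct_add, dotProduct_mulVec v, dotProduct_comm _ u, ← mulVec_transpose]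

end IsQuadraticWithHessian

theorem det_one_add_vecMulVec [Fintype n] [DecidableEq n] [CommRing R] (u v : n → R) :
    (1 + vecMulVec u v).det = 1 + v ⬝ᵥ u := by
  rw [vecMulVec_eq Unit, det_one_add_replicateCol_mul_replicateRow]

theorem trace_transpose_mul_self_one_add_vecMulVec [Fintype n] [DecidableEq n] [CommSemiring R]
    (u v : n → R) :
    ((1 + vecMulVec u v)ᵀ * (1 + vecMulVec u v)).trace =
      Fintype.card n + 2 * (u ⬝ᵥ v) + (u ⬝ᵥ u) * (v ⬝ᵥ v) := by
  simp only [transpose_add, transpose_one, transpose_vecMulVec, Matrix.add_mul, Matrix.mul_add,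
    Matrix.one_mul, Matrix.mul_one, vecMulVec_mul_vecMulVec, trace_add, trace_one, trace_vecMulVec,
    dotProduct_smul, smul_eq_mul]
  rw [dotProduct_comm v u]
  ring

theorem sum_vecMulVec_single [Fintype m] [DecidableEq n] [CommSemiring R] (s : n) (a : m → R)
    (G : Matrix m n R) :
    ∑ k, vecMulVec (Pi.single s (a k)) (G k) = vecMulVec (Pi.single s 1) (a ᵥ* G) := by
  ext p q
  simp [vecMulVec_apply, Pi.single_apply, vecMul, dotProduct, Matrix.sum_apply]

theorem sum_vecMulVec_single_one [Fintype n] [DecidableEq n] [Semiring R] :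
    ∑ s : n, vecMulVec (Pi.single s (1 : R)) (Pi.single s 1) = 1 := by
  ext p q
  by_cases h : p = q <;> simp [h, Matrix.sum_apply, vecMulVec_apply, Pi.single_apply, one_apply]

end Matrix

section AcousticTensor

variable {n : Type*} [Fintype n] [DecidableEq n]

def acousticTensor (lam mu : ℝ) (u : n → ℝ) : Matrix n n ℝ :=
  (lam + mu) • vecMulVec u u + (mu * (u ⬝ᵥ u)) • 1

theorem acousticTensor_transpose (lam mu : ℝ) (u : n → ℝ) :
    (acousticTensor lam mu u)ᵀ = acousticTensor lam mu u := by
  simp [acousticTensor, transpose_vecMulVec]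

theorem sum_acousticTensor_single (lam mu : ℝ) :
    ∑ s : n, acousticTensor lam mu (Pi.single s 1) = (lam + (Fintype.card n + 1) * mu) • 1 := by
  simp only [acousticTensor, Finset.sum_add_distrib, ← Finset.smul_sum, sum_vecMulVec_single_one,
    single_one_dotProduct, Pi.single_eq_same, mul_one, Finset.sum_const, Finset.card_univ]
  module

theorem dotProduct_acousticTensor_mulVec (lam mu : ℝ) (u w : n → ℝ) :
    w ⬝ᵥ acousticTensor lam mu u *ᵥ w = (lam + mu) * (u ⬝ᵥ w) ^ 2 + mu * (u ⬝ᵥ u) * (w ⬝ᵥ w) := by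
  simp only [acousticTensor, add_mulVec, smul_mulVec, vecMulVec_mulVec, op_smul_eq_smul,
    one_mulVec, dotProduct_add, dotProduct_smul, smul_eq_mul, dotProduct_comm w u]
  ring

end AcousticTensor

theorem isQuadraticWithHessian_neoHookean (lam mu E0 : ℝ) (u : Fin 3 → ℝ) :
    IsQuadraticWithHessian (acousticTensor lam mu u)
      fun w => neoHookean lam mu E0 (1 + vecMulVec u w) := by
  refine ⟨((lam + mu) * (mu / (lam + mu)) ^ 2 + 3 * mu - E0) / 2,
    (mu - (lam + mu) * (mu / (lam + mu))) • u, (1 / 2 : ℝ) • acousticTensor lam mu u, ?_,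
    fun w => ?_⟩
  · rw [transpose_smul, acousticTensor_transpose, ← add_smul]
    norm_num
  dsimp only [neoHookean]
  rw [det_one_add_vecMulVec, trace_transpose_mul_self_one_add_vecMulVec, smul_mulVec,
    dotProduct_smul, dotProduct_acousticTensor_mulVec, smul_dotProduct, smul_eq_mul, smul_eq_mul,
    Fintype.card_fin, dotProduct_comm w u]
  ring

theorem weight_space_hessian_general (N K : ℕ) (E0 : ℝ)
    (v lam mu : Fin N → ℝ)
    (g : Fin N → Fin K → Fin 3 → ℝ)
    (E : (Fin K → Fin 3 → ℝ) → ℝ)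
    (hE : E = fun d => ∑ i, v i *
      neoHookean (lam i) (mu i) E0 (1 + ∑ k, Matrix.vecMulVec (d k) (g i k))) :
    ∀ k l : Fin K,
      (∑ s : Fin 3,
        fderiv ℝ (fderiv ℝ (fun a : Fin K → ℝ => E fun k' => Pi.single s (a k'))) 0
          (Pi.single k 1) (Pi.single l 1)) =
      ∑ i, v i * (lam i + 4 * mu i) * ∑ t, g i k t * g i l t := by
  intro k l
  have hquad : ∀ s : Fin 3, IsQuadraticWithHessian
      (∑ i, v i • (of (g i) * acousticTensor (lam i) (mu i) (Pi.single s 1) * (of (g i))ᵀ))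
      fun a => E fun k' => Pi.single s (a k') := by
    intro s
    simp only [hE, fun i a => sum_vecMulVec_single s a (g i)]
    exact .sum_mul (fun i => (isQuadraticWithHessian_neoHookean _ _ E0 _).comp_vecMul (g i)) v
  simp only [(hquad _).fderiv_fderiv, single_one_dotProduct, mulVec_single_one, col_apply]
  calc _ = (∑ i, v i • (of (g i) * (∑ s : Fin 3, acousticTensor (lam i) (mu i) (Pi.single s 1)) *
              (of (g i))ᵀ)) k l := by
        simp only [← Matrix.sum_apply, Finset.sum_comm (γ := Fin 3), ← Finset.smul_sum,
          ← Matrix.mul_sum, ← Matrix.sum_mul]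
    _ = _ := by
        simp only [sum_acousticTensor_single, Matrix.mul_smul, Matrix.mul_one, Matrix.smul_mul,
          Matrix.sum_apply, Matrix.smul_apply, mul_apply, of_apply, transpose_apply,
          Fintype.card_fin, smul_eq_mul]
        refine Finset.sum_congr rfl fun i _ => ?_
        ring

/-- Discrete form of Proposition 1: the weight-space Hessian
`H_w = H_xx + H_yy + H_zz` of the discrete elastic energy
`E(d) = Σ_i v_i Ψ_i(I + Σ_k d_k g_{i,k}ᵀ)` has entries
`(H_w)_{kl} = Σ_i v_i (λ_i + 4 μ_i) ⟨g_{i,k}, g_{i,l}⟩`. -/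
theorem weight_space_hessian (N K : ℕ) (E0 : ℝ)
    (v lam mu : Fin N → ℝ)
    (hv : ∀ i, 0 < v i) (hlm : ∀ i, lam i + mu i ≠ 0)
    (g : Fin N → Fin K → Fin 3 → ℝ)
    (E : (Fin K → Fin 3 → ℝ) → ℝ)
    (hE : E = fun d => ∑ i, v i *
      neoHookean (lam i) (mu i) E0 (1 + ∑ k, Matrix.vecMulVec (d k) (g i k))) :
    ∀ k l : Fin K,
      (∑ s : Fin 3,
        fderiv ℝ (fderiv ℝ (fun a : Fin K → ℝ => E fun k' => Pi.single s (a k'))) 0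
          (Pi.single k 1) (Pi.single l 1)) =
      ∑ i, v i * (lam i + 4 * mu i) * ∑ t, g i k t * g i l t :=
  weight_space_hessian_general N K E0 v lam mu g E hE
end
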